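/- arXiv:2508.11219 — 5 statements merged into one kernel-verified Lean document; each statement's English description precedes it below -/
import Mathlib

section
/- Fix δ > 0, ν₁ ∈ (0,1), ν₂ ∈ (1,∞). There exist constants 0 < η̲ ≤ η̄ < ∞, depending only on δ, ν₁, ν₂, with the following property. Let s, m̄ ∈ ℂ^N be nonzero vectors satisfying ν₁ ≤ Re⟨s, m̄⟩ / ⟨s,s⟩ and ⟨m̄, m̄⟩ / Re⟨s, m̄⟩ ≤ ν₂ (in particular Re⟨s,m̄⟩ > 0). Define τ = ⟨s,s⟩/Re⟨s,m̄⟩ − √( (⟨s,s⟩/Re⟨s,m̄⟩)² − ⟨s,s⟩/⟨m̄,m̄⟩ ) (the quantity under the square root is nonnegative by the Cauchy–Schwarz inequality, and τ > 0); define ρ = Re⟨s − τ m̄, m̄⟩; set u = 0 if ρ ≤ δ‖s − τ m̄‖‖m̄‖ and u = s − τ m̄ otherwise; set ρ_B = τ²ρ + τ u^H u and B = τ⁻¹ I_N − u u^H / ρ_B (interpreted as B = τ⁻¹ I_N when u = 0). Then B is Hermitian and η̲ I_N ⪯ B ⪯ η̄ I_N in the Loewner order. -/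
/-!
Write `a = ‖s‖²`, `b = Re⟨s, m̄⟩`, `c = ‖m̄‖²`. The scaling `τ` is the smaller root of
`x² - 2(a/b) x + a/c`; the roots are positive with sum `2a/b` and product `a/c`, so
`b/(2c) ≤ τ ≤ a/b`, which puts `τ⁻¹` in `[ν₁, 2ν₂]`. The correction `u uᴴ / ρ_B` lies between `0`
and `‖u‖²/ρ_B • I`, and `τ⁻¹ - ‖u‖²/ρ_B = ρ / (τρ + ‖u‖²)`. When `u ≠ 0` the safeguard
`ρ > δ‖u‖‖m̄‖` and the bound `ν₁‖u‖ ≤ 2‖m̄‖` give `‖u‖² < 2ρ/(δν₁)`, so this quotient is at least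
`δν₁/(δ+2)`.
-/

open Matrix
open scoped ComplexOrder MatrixOrder

namespace Matrix

variable {𝕜 n : Type*} [RCLike 𝕜] [Fintype n] [DecidableEq n]

theorem isHermitian_smul_one_sub_smul_vecMulVec (v : n → 𝕜) (c d : ℝ) :
    ((c : 𝕜) • (1 : Matrix n n 𝕜) - (d : 𝕜) • vecMulVec v (star v)).IsHermitian :=
  (isHermitian_one.smul (RCLike.conj_ofReal c)).sub
    ((posSemidef_vecMulVec_self_star v).isHermitian.smul (RCLike.conj_ofReal d))

theorem star_dotProduct_smul_one_sub_smul_vecMulVec_mulVec (v x : EuclideanSpace 𝕜 n) (c d : ℝ) :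
    star x.ofLp ⬝ᵥ (((c : 𝕜) • 1 - (d : 𝕜) • vecMulVec v.ofLp (star v.ofLp)) *ᵥ x.ofLp)
      = ((c * ‖x‖ ^ 2 - d * ‖inner 𝕜 v x‖ ^ 2 : ℝ) : 𝕜) := by
  have hx : star x.ofLp ⬝ᵥ x.ofLp = ((‖x‖ ^ 2 : ℝ) : 𝕜) := by
    rw [dotProduct_comm, ← EuclideanSpace.inner_eq_star_dotProduct, inner_self_eq_norm_sq_to_K]
    norm_cast
  have hv : star x.ofLp ⬝ᵥ (vecMulVec v.ofLp (star v.ofLp) *ᵥ x.ofLp)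
      = ((‖inner 𝕜 v x‖ ^ 2 : ℝ) : 𝕜) := by
    rw [vecMulVec_mulVec, op_smul_eq_smul, dotProduct_smul, star_dotProduct, smul_eq_mul,
      dotProduct_comm, ← EuclideanSpace.inner_eq_star_dotProduct, RCLike.star_def,
      RCLike.conj_mul, norm_inner_symm]
    norm_cast
  simp only [sub_mulVec, smul_mulVec, one_mulVec, dotProduct_sub, dotProduct_smul, hx, hv,
    smul_eq_mul]
  push_cast
  ring

theorem posSemidef_smul_one_sub_smul_vecMulVec (v : EuclideanSpace 𝕜 n) {c d : ℝ}
    (hc : 0 ≤ c) (hdc : d * ‖v‖ ^ 2 ≤ c) :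
    ((c : 𝕜) • 1 - (d : 𝕜) • vecMulVec v.ofLp (star v.ofLp)).PosSemidef := by
  refine .of_dotProduct_mulVec_nonneg (isHermitian_smul_one_sub_smul_vecMulVec _ c d) fun x => ?_
  rw [← WithLp.ofLp_toLp 2 x, star_dotProduct_smul_one_sub_smul_vecMulVec_mulVec,
    RCLike.ofReal_nonneg]
  set X := WithLp.toLp 2 x
  have hcs : ‖inner 𝕜 v X‖ ^ 2 ≤ ‖v‖ ^ 2 * ‖X‖ ^ 2 := by
    rw [← mul_pow]; exact pow_le_pow_left₀ (norm_nonneg _) (norm_inner_le_norm v X) 2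
  rcases le_total d 0 with hd | hd
  · nlinarith [sq_nonneg ‖X‖, sq_nonneg ‖inner 𝕜 v X‖]
  · nlinarith [sq_nonneg ‖X‖, mul_le_mul_of_nonneg_left hcs hd]

theorem smul_one_le_smul_one_sub_smul_vecMulVec (v : EuclideanSpace 𝕜 n) {c d lo : ℝ}
    (hd : 0 ≤ d * ‖v‖ ^ 2) (hlo : lo + d * ‖v‖ ^ 2 ≤ c) :
    (lo : 𝕜) • 1 ≤ (c : 𝕜) • 1 - (d : 𝕜) • vecMulVec v.ofLp (star v.ofLp) := by
  rw [le_iff]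
  convert posSemidef_smul_one_sub_smul_vecMulVec v (c := c - lo) (d := d) (by linarith)
    (by linarith) using 1
  push_cast
  module

theorem smul_one_sub_smul_vecMulVec_le_smul_one (v : EuclideanSpace 𝕜 n) {c d hi : ℝ}
    (hd : 0 ≤ d * ‖v‖ ^ 2) (hhi : c ≤ hi) :
    (c : 𝕜) • 1 - (d : 𝕜) • vecMulVec v.ofLp (star v.ofLp) ≤ (hi : 𝕜) • 1 := by
  rw [le_iff]
  convert posSemidef_smul_one_sub_smul_vecMulVec v (c := hi - c) (d := -d) (by linarith)
    (by linarith) using 1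
  push_cast
  module

end Matrix

section InnerProductSpace

open RCLike

variable {𝕜 E : Type*} [RCLike 𝕜] [NormedAddCommGroup E] [InnerProductSpace 𝕜 E]

theorem re_inner_sq_le_re_inner_self_mul (x y : E) :
    re (inner 𝕜 x y) ^ 2 ≤ re (inner 𝕜 x x) * re (inner 𝕜 y y) := by
  have h := inner_mul_inner_self_le (𝕜 := 𝕜) x y
  rw [norm_inner_symm y x, ← sq] at h
  exact (sq_le_sq.2 ((abs_re_le_norm _).trans (abs_norm _).symm.le)).trans h

theorem mul_norm_le_norm_of_le_re_inner_div {x y : E} {ν : ℝ} (hx : x ≠ 0)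
    (h : ν ≤ re (inner 𝕜 y x) / re (inner 𝕜 x x)) : ν * ‖x‖ ≤ ‖y‖ := by
  have hx' : 0 < ‖x‖ := norm_pos_iff.2 hx
  rw [inner_self_eq_norm_sq, le_div_iff₀ (by positivity)] at h
  have := h.trans (re_inner_le_norm y x)
  nlinarith

theorem mul_norm_sub_smul_le {x y : E} {ν τ : ℝ} (hν : 0 ≤ ν) (hτ : 0 ≤ τ)
    (hx : ν * ‖x‖ ≤ ‖y‖) (hντ : ν * τ ≤ 1) : ν * ‖x - (τ : 𝕜) • y‖ ≤ 2 * ‖y‖ := by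
  have h := norm_sub_le x ((τ : 𝕜) • y)
  rw [norm_smul, norm_ofReal, abs_of_nonneg hτ] at h
  nlinarith [mul_le_mul_of_nonneg_left h hν, mul_le_mul_of_nonneg_right hντ (norm_nonneg y)]

end InnerProductSpace

theorem div_two_mul_le_sub_sqrt_sq_sub {p q : ℝ} (hp : 0 < p) (hqp : q ≤ p ^ 2) :
    q / (2 * p) ≤ p - √(p ^ 2 - q) := by
  have hr := Real.sq_sqrt (sub_nonneg.2 hqp)
  rw [div_le_iff₀ (by positivity)]
  nlinarith [sq_nonneg (p - √(p ^ 2 - q))]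

namespace SR1

theorem tau_bounds {a b c ν₁ ν₂ τ : ℝ} (ha : 0 < a) (hb : 0 < b) (hc : 0 < c)
    (hbac : b ^ 2 ≤ a * c) (hν₁ : ν₁ ≤ b / a) (hν₂ : c / b ≤ ν₂)
    (hτ : τ = a / b - √((a / b) ^ 2 - a / c)) :
    0 < τ ∧ ν₁ ≤ τ⁻¹ ∧ τ⁻¹ ≤ 2 * ν₂ := by
  have hroot : b / (2 * c) ≤ τ := by
    have hqp : a / c ≤ (a / b) ^ 2 := by
      rw [div_pow, div_le_div_iff₀ hc (by positivity)]
      nlinarith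
    convert div_two_mul_le_sub_sqrt_sq_sub (by positivity) hqp using 1
    field_simp
  have hτ0 : 0 < τ := lt_of_lt_of_le (by positivity) hroot
  refine ⟨hτ0, ?_, ?_⟩
  · calc ν₁ ≤ b / a := hν₁
      _ = (a / b)⁻¹ := (inv_div a b).symm
      _ ≤ τ⁻¹ := inv_anti₀ hτ0 (by rw [hτ]; exact sub_le_self _ (Real.sqrt_nonneg _))
  · calc τ⁻¹ ≤ (b / (2 * c))⁻¹ := inv_anti₀ (by positivity) hroot
      _ = 2 * (c / b) := by field_simp
      _ ≤ 2 * ν₂ := by linarith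

theorem correction_bounds {δ ν τ ρ U m : ℝ} (hδ : 0 < δ) (hν : 0 < ν) (hτ : 0 < τ)
    (hντ : ν * τ ≤ 1) (hU : 0 ≤ U) (hUm : ν * U ≤ 2 * m) (hρ : δ * U * m < ρ) :
    0 ≤ (τ ^ 2 * ρ + τ * U ^ 2)⁻¹ * U ^ 2 ∧
      δ * ν / (δ + 2) + (τ ^ 2 * ρ + τ * U ^ 2)⁻¹ * U ^ 2 ≤ τ⁻¹ := by
  have hm : 0 ≤ m := by nlinarith
  have hρ0 : 0 < ρ := lt_of_le_of_lt (by positivity) hρ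
  have hU2 : δ * ν * U ^ 2 ≤ 2 * ρ := by
    nlinarith [mul_le_mul_of_nonneg_left hUm (mul_nonneg hδ.le hU)]
  have hden : 0 < τ * ρ + U ^ 2 := by positivity
  refine ⟨by positivity, ?_⟩
  have key : τ⁻¹ - (τ ^ 2 * ρ + τ * U ^ 2)⁻¹ * U ^ 2 = ρ / (τ * ρ + U ^ 2) := by
    field_simp
    ring
  rw [← le_sub_iff_add_le, key, div_le_div_iff₀ (by positivity) hden]
  nlinarith [mul_le_mul_of_nonneg_left hντ (mul_nonneg hδ.le hρ0.le)]

end SR1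

/-- The paper's `⟨s, m̄⟩ = m̄ᴴ s` is Mathlib's `inner ℂ mb s`. -/
theorem bounded_hessian_of_SR1_update (δ ν₁ ν₂ : ℝ)
    (hδ : 0 < δ) (hν₁ : ν₁ ∈ Set.Ioo (0 : ℝ) 1) (hν₂ : ν₂ ∈ Set.Ioi (1 : ℝ)) :
    ∃ ηlo ηhi : ℝ, 0 < ηlo ∧ ηlo ≤ ηhi ∧
      ∀ (N : ℕ) (s mb : EuclideanSpace ℂ (Fin N)), s ≠ 0 → mb ≠ 0 →
        ν₁ ≤ (inner (𝕜 := ℂ) mb s).re / (inner (𝕜 := ℂ) s s).re →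
        (inner (𝕜 := ℂ) mb mb).re / (inner (𝕜 := ℂ) mb s).re ≤ ν₂ →
        ∀ τ : ℝ, τ = (inner (𝕜 := ℂ) s s).re / (inner (𝕜 := ℂ) mb s).re
            - Real.sqrt (((inner (𝕜 := ℂ) s s).re / (inner (𝕜 := ℂ) mb s).re) ^ 2
              - (inner (𝕜 := ℂ) s s).re / (inner (𝕜 := ℂ) mb mb).re) →
        ∀ ρ : ℝ, ρ = (inner (𝕜 := ℂ) mb (s - (τ : ℂ) • mb)).re →
        ∀ u : EuclideanSpace ℂ (Fin N),
          u = (if ρ ≤ δ * ‖s - (τ : ℂ) • mb‖ * ‖mb‖ then 0 else s - (τ : ℂ) • mb) →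
        ∀ ρB : ℝ, ρB = τ ^ 2 * ρ + τ * (inner (𝕜 := ℂ) u u).re →
        ∀ B : Matrix (Fin N) (Fin N) ℂ,
          B = (τ⁻¹ : ℂ) • (1 : Matrix (Fin N) (Fin N) ℂ)
              - ((ρB : ℂ))⁻¹ • vecMulVec (fun i => u i) (star fun i => u i) →
        B.IsHermitian ∧ (B - (ηlo : ℂ) • 1).PosSemidef
          ∧ ((ηhi : ℂ) • 1 - B).PosSemidef := by
  obtain ⟨hν₁0, hν₁1⟩ := hν₁
  have hηlo : δ * ν₁ / (δ + 2) ≤ ν₁ := by rw [div_le_iff₀ (by positivity)]; nlinarith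
  refine ⟨δ * ν₁ / (δ + 2), 2 * ν₂, by positivity, by linarith [Set.mem_Ioi.1 hν₂], ?_⟩
  intro N s mb hs hmb hsm hmm τ hτ ρ _ u hu ρB hρB B hB
  have ha : 0 < (inner ℂ s s).re := (re_inner_self_pos (𝕜 := ℂ)).2 hs
  have hc : 0 < (inner ℂ mb mb).re := (re_inner_self_pos (𝕜 := ℂ)).2 hmb
  have hb : 0 < (inner ℂ mb s).re := (mul_pos hν₁0 ha).trans_le ((le_div_iff₀ ha).1 hsm)
  have hbac : (inner ℂ mb s).re ^ 2 ≤ (inner ℂ s s).re * (inner ℂ mb mb).re :=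
    (re_inner_sq_le_re_inner_self_mul (𝕜 := ℂ) mb s).trans_eq (mul_comm _ _)
  obtain ⟨hτ0, hν₁τ, hτν₂⟩ := SR1.tau_bounds ha hb hc hbac hsm hmm hτ
  have hcorr : 0 ≤ ρB⁻¹ * ‖u‖ ^ 2 ∧ δ * ν₁ / (δ + 2) + ρB⁻¹ * ‖u‖ ^ 2 ≤ τ⁻¹ := by
    rw [show (inner ℂ u u).re = ‖u‖ ^ 2 from inner_self_eq_norm_sq (𝕜 := ℂ) u] at hρB
    split_ifs at hu with hsmall
    · subst hu
      simpa using hηlo.trans hν₁τ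
    · subst hu hρB
      have hν₁τ' : ν₁ * τ ≤ 1 := (le_div_iff₀ hτ0).1 (one_div τ ▸ hν₁τ)
      have hs_le : ν₁ * ‖s‖ ≤ ‖mb‖ := mul_norm_le_norm_of_le_re_inner_div (𝕜 := ℂ) hs hsm
      exact SR1.correction_bounds hδ hν₁0 hτ0 hν₁τ' (norm_nonneg _)
        (mul_norm_sub_smul_le hν₁0.le hτ0.le hs_le hν₁τ') (not_le.1 hsmall)
  subst hB
  rw [← Complex.ofReal_inv, ← Complex.ofReal_inv]
  exact ⟨isHermitian_smul_one_sub_smul_vecMulVec _ _ _,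
    smul_one_le_smul_one_sub_smul_vecMulVec u hcorr.1 hcorr.2,
    smul_one_sub_smul_vecMulVec_le_smul_one u hcorr.1 hτν₂⟩
end

section
/- Let A ∈ ℂ^{m×N}, y ∈ ℂ^m, and define h(x) = (1/2)‖Ax − y‖² for x ∈ ℂ^N. Let V ∈ ℂ^{N×k} satisfy V^H V = I_k, let C ⊆ ℂ^N be a closed convex set, let B ∈ ℂ^{N×N} be Hermitian with B ⪰ η̲ I_N for some η̲ > 0, let α > 0 and g ∈ ℂ^N. Suppose x_k ∈ C lies in the range of V, suppose the function Φ(x) = h(x) + Re⟨g, x⟩ + (1/(2α)) (x − x_k)^H B (x − x_k) is η̲-strongly convex on ℂ^N (viewed as a real vector space), and suppose β_k minimizes β ↦ Φ(Vβ) over the set {β ∈ ℂ^k : Vβ ∈ C}; set x_{k+1} = V β_k. Then Re⟨g, x_{k+1} − x_k⟩ ≤ −(1/2) (x_k − x_{k+1})^H ((2/α) B − η̲ I_N) (x_k − x_{k+1}) + h(x_k) − h(x_{k+1}). -/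
open Matrix Set Filter Topology
open scoped ComplexOrder

/-!
Moving from `x_{k+1} = Vβ_k` towards `x_k` stays feasible (`C` is convex and both points lie
in the range of `V`), so `Φ(x_{k+1}) ≤ Φ((1-t)x_{k+1} + t x_k)` for `t ∈ (0,1]`. Along this
segment `h + Re⟨g,·⟩` is convex while the proximal term scales by `(1-t)²`; dividing by `t` and
letting `t → 0` gives the first-order inequality
`h(x_{k+1}) + Re⟨g,x_{k+1}⟩ + (1/α) qᴴBq ≤ h(x_k) + Re⟨g,x_k⟩` with `q = x_{k+1} - x_k`.
The claim follows because its `η̲`-term is nonnegative.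
-/

theorem le_of_forall_mem_Ioc_le_add_mul {u v w : ℝ} (h : ∀ t ∈ Ioc (0 : ℝ) 1, u ≤ v + t * w) :
    u ≤ v := by
  have hlim : Tendsto (fun t : ℝ => v + t * w) (𝓝[>] 0) (𝓝 v) := by
    have hc : ContinuousAt (fun t : ℝ => v + t * w) 0 := by fun_prop
    simpa using hc.tendsto.mono_left nhdsWithin_le_nhds
  exact ge_of_tendsto hlim (eventually_of_mem (Ioc_mem_nhdsGT zero_lt_one) h)

theorem ConvexOn.add_two_mul_le_of_le_on_segment {E : Type*} [AddCommGroup E] [Module ℝ E]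
    {s : Set E} {φ : E → ℝ} (hφ : ConvexOn ℝ s φ) {x z : E} (hx : x ∈ s) (hz : z ∈ s) {q : ℝ}
    (hseg : ∀ t ∈ Ioc (0 : ℝ) 1, φ x + q ≤ φ ((1 - t) • x + t • z) + (1 - t) ^ 2 * q) :
    φ x + 2 * q ≤ φ z := by
  refine le_of_forall_mem_Ioc_le_add_mul (w := q) fun t ht => ?_
  have hconv : φ ((1 - t) • x + t • z) ≤ (1 - t) * φ x + t * φ z :=
    hφ.2 hx hz (sub_nonneg.2 ht.2) ht.1.le (by ring)
  have : t * (φ x + 2 * q) ≤ t * (φ z + t * q) := by nlinarith [hseg t ht]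
  exact le_of_mul_le_mul_left this ht.1

theorem convexOn_half_norm_sub_sq {E F : Type*} [AddCommGroup E] [Module ℝ E]
    [SeminormedAddCommGroup F] [NormedSpace ℝ F] (L : E →ₗ[ℝ] F) (y : F) :
    ConvexOn ℝ univ fun x => 1 / 2 * ‖L x - y‖ ^ 2 := by
  have hsq : ConvexOn ℝ univ fun v : F => ‖v‖ ^ 2 :=
    convexOn_univ_norm.pow (fun _ _ => norm_nonneg _) 2
  simpa [sub_eq_add_neg] using
    ((hsq.translate_left (-y)).comp_linearMap L).smul (by norm_num : (0 : ℝ) ≤ 1 / 2)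

theorem re_inner_smul_map_smul {E : Type*} [NormedAddCommGroup E]
    [InnerProductSpace ℂ E] (T : E →ₗ[ℂ] E) (s : ℝ) (v : E) :
    (inner ℂ (s • v) (T (s • v))).re = s ^ 2 * (inner ℂ v (T v)).re := by
  rw [← Complex.coe_smul, map_smul, inner_smul_left, inner_smul_right, Complex.conj_ofReal,
    ← mul_assoc, ← Complex.ofReal_mul, Complex.re_ofReal_mul, sq]

theorem re_inner_toEuclideanLin_smul_sub_smul_one {n : Type*} [Fintype n] [DecidableEq n]
    (B : Matrix n n ℂ) (a b : ℝ) (v : EuclideanSpace ℂ n) :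
    (inner ℂ v (toEuclideanLin ((a : ℂ) • B - (b : ℂ) • 1) v)).re
      = a * (inner ℂ v (toEuclideanLin B v)).re - b * ‖v‖ ^ 2 := by
  have hone : toEuclideanLin (1 : Matrix n n ℂ) = LinearMap.id := by
    ext; simp
  rw [map_sub, map_smul, map_smul, hone, LinearMap.sub_apply, LinearMap.smul_apply,
    LinearMap.smul_apply, LinearMap.id_apply, inner_sub_right, inner_smul_right, inner_smul_right,
    Complex.sub_re, Complex.re_ofReal_mul, Complex.re_ofReal_mul]
  congr 2
  exact inner_self_eq_norm_sq (𝕜 := ℂ) v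

theorem gksm_subproblem_inequality_general (m N k : ℕ)
    (A : Matrix (Fin m) (Fin N) ℂ) (y : EuclideanSpace ℂ (Fin m))
    (h : EuclideanSpace ℂ (Fin N) → ℝ)
    (hdef : ∀ x, h x = 1 / 2 * ‖Matrix.toEuclideanLin A x - y‖ ^ 2)
    (V : Matrix (Fin N) (Fin k) ℂ)
    (C : Set (EuclideanSpace ℂ (Fin N))) (hCconv : Convex ℝ C)
    (B : Matrix (Fin N) (Fin N) ℂ)
    (ηlo : ℝ) (hηlo : 0 < ηlo)
    (α : ℝ) (g : EuclideanSpace ℂ (Fin N))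
    (xk : EuclideanSpace ℂ (Fin N)) (hxkC : xk ∈ C)
    (hxkV : ∃ β', xk = Matrix.toEuclideanLin V β')
    (Φ : EuclideanSpace ℂ (Fin N) → ℝ)
    (hΦdef : ∀ x, Φ x = h x + (inner (𝕜 := ℂ) g x).re
      + 1 / (2 * α) * (inner (𝕜 := ℂ) (x - xk) (Matrix.toEuclideanLin B (x - xk))).re)
    (βk : EuclideanSpace ℂ (Fin k))
    (hfeas : Matrix.toEuclideanLin V βk ∈ C)
    (hmin : ∀ β : EuclideanSpace ℂ (Fin k), Matrix.toEuclideanLin V β ∈ C →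
      Φ (Matrix.toEuclideanLin V βk) ≤ Φ (Matrix.toEuclideanLin V β)) :
    (inner (𝕜 := ℂ) g (Matrix.toEuclideanLin V βk - xk)).re ≤
      -(1 / 2) * (inner (𝕜 := ℂ) (xk - Matrix.toEuclideanLin V βk)
          (Matrix.toEuclideanLin (((2 / α : ℝ) : ℂ) • B - (ηlo : ℂ) • 1)
            (xk - Matrix.toEuclideanLin V βk))).re
        + h xk - h (Matrix.toEuclideanLin V βk) := by
  obtain ⟨β', rfl⟩ := hxkV
  set L := Matrix.toEuclideanLin V
  set x := L βk
  set φ := fun z => h z + (inner ℂ g z).re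
  set Q := (inner ℂ (x - L β') (toEuclideanLin B (x - L β'))).re
  have hφ : ConvexOn ℝ univ φ := by
    simp only [φ, hdef]
    exact (convexOn_half_norm_sub_sq ((toEuclideanLin A).restrictScalars ℝ) y).add
      ((Complex.reLm.comp ((innerₛₗ ℂ g).restrictScalars ℝ)).convexOn convex_univ)
  have hseg : ∀ t ∈ Ioc (0 : ℝ) 1, φ x + 1 / (2 * α) * Q ≤
      φ ((1 - t) • x + t • L β') + (1 - t) ^ 2 * (1 / (2 * α) * Q) := by
    intro t ht
    have hcomb : (1 - t) • x + t • L β' = L ((1 - t) • βk + t • β') := by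
      simp only [map_add, LinearMap.map_smul_of_tower, x]
    have hshift : (1 - t) • x + t • L β' - L β' = (1 - t) • (x - L β') := by module
    have := hmin _ (hcomb ▸ hCconv hfeas hxkC (sub_nonneg.2 ht.2) ht.1.le (by ring))
    rw [← hcomb, hΦdef, hΦdef, hshift, re_inner_smul_map_smul] at this
    linarith
  have hopt := hφ.add_two_mul_le_of_le_on_segment trivial trivial hseg
  have hQ : (inner ℂ (L β' - x) (toEuclideanLin B (L β' - x))).re = Q := by
    rw [← neg_sub, map_neg, inner_neg_neg]
  rw [re_inner_toEuclideanLin_smul_sub_smul_one, hQ, inner_sub_right, Complex.sub_re]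
  have hnorm : 0 ≤ ηlo * ‖L β' - x‖ ^ 2 := by positivity
  have hcoef : 2 / α = 4 * (1 / (2 * α)) := by ring
  simp only [φ] at hopt
  rw [hcoef]
  linarith

/-- **Key inequality for the subspace-constrained proximal subproblem (Lemma 3).**
`ℂ^N` carries the Hermitian inner product `⟨u,v⟩ = vᴴ u` (so `Re⟨u,v⟩` is
Mathlib's `(⟪u,v⟫_ℂ).re`).  If `V` has orthonormal columns, `C` is closed and
convex, `B` is Hermitian with `B ⪰ η̲ I`, `Φ(x) = h(x) + Re⟨g,x⟩ +
(1/(2α))(x-x_k)ᴴB(x-x_k)` is `η̲`-strongly convex, `x_k ∈ C` lies in the range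
of `V`, and `β_k` minimizes `β ↦ Φ(Vβ)` over `{β : Vβ ∈ C}`, then with
`x_{k+1} = Vβ_k` one has
`Re⟨g, x_{k+1}-x_k⟩ ≤ -(1/2)(x_k-x_{k+1})ᴴ((2/α)B - η̲I)(x_k-x_{k+1})
  + h(x_k) - h(x_{k+1})`. -/
theorem gksm_subproblem_inequality (m N k : ℕ)
    (A : Matrix (Fin m) (Fin N) ℂ) (y : EuclideanSpace ℂ (Fin m))
    (h : EuclideanSpace ℂ (Fin N) → ℝ)
    (hdef : ∀ x, h x = 1 / 2 * ‖Matrix.toEuclideanLin A x - y‖ ^ 2)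
    (V : Matrix (Fin N) (Fin k) ℂ) (hV : Vᴴ * V = 1)
    (C : Set (EuclideanSpace ℂ (Fin N))) (hCc : IsClosed C) (hCconv : Convex ℝ C)
    (B : Matrix (Fin N) (Fin N) ℂ) (hBherm : B.IsHermitian)
    (ηlo : ℝ) (hηlo : 0 < ηlo) (hBlo : (B - (ηlo : ℂ) • 1).PosSemidef)
    (α : ℝ) (hα : 0 < α) (g : EuclideanSpace ℂ (Fin N))
    (xk : EuclideanSpace ℂ (Fin N)) (hxkC : xk ∈ C)
    (hxkV : ∃ β', xk = Matrix.toEuclideanLin V β')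
    (Φ : EuclideanSpace ℂ (Fin N) → ℝ)
    (hΦdef : ∀ x, Φ x = h x + (inner (𝕜 := ℂ) g x).re
      + 1 / (2 * α) * (inner (𝕜 := ℂ) (x - xk) (Matrix.toEuclideanLin B (x - xk))).re)
    (hstrong : ConvexOn ℝ Set.univ (fun x => Φ x - ηlo / 2 * ‖x‖ ^ 2))
    (βk : EuclideanSpace ℂ (Fin k))
    (hfeas : Matrix.toEuclideanLin V βk ∈ C)
    (hmin : ∀ β : EuclideanSpace ℂ (Fin k), Matrix.toEuclideanLin V β ∈ C →
      Φ (Matrix.toEuclideanLin V βk) ≤ Φ (Matrix.toEuclideanLin V β)) :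
    (inner (𝕜 := ℂ) g (Matrix.toEuclideanLin V βk - xk)).re ≤
      -(1 / 2) * (inner (𝕜 := ℂ) (xk - Matrix.toEuclideanLin V βk)
          (Matrix.toEuclideanLin (((2 / α : ℝ) : ℂ) • B - (ηlo : ℂ) • 1)
            (xk - Matrix.toEuclideanLin V βk))).re
        + h xk - h (Matrix.toEuclideanLin V βk) :=
  gksm_subproblem_inequality_general m N k A y h hdef V C hCconv B ηlo hηlo α g xk hxkC hxkV Φ hΦdef
    βk hfeas hmin
end

section
/- Let t ∈ (0, 1/2], γ > 0, and let (φ_k)_{k≥1} be a sequence of positive real numbers such that for every k ≥ 1, φ_{k+1} ≤ φ_k and φ_{k+1}^{2t} ≤ γ (φ_k − φ_{k+1}). Then for every k ≥ 1, φ_{k+1} ≤ (1 − φ₁^{2t−1}/(γ + φ₁^{2t−1}))^k · φ₁. In particular, for t = 1/2 this yields φ_{k+1} ≤ (γ/(1+γ))^k φ₁. -/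
/-! Since `2t - 1 ≤ 0` and `φ` is nonincreasing, `φ₁^{2t-1} ≤ φ_{k+1}^{2t-1}`, so the hypothesis
gives `φ₁^{2t-1} φ_{k+1} ≤ φ_{k+1}^{2t} ≤ γ (φ_k - φ_{k+1})`, i.e. the contraction
`φ_{k+1} ≤ γ/(γ + φ₁^{2t-1}) · φ_k`; iterating it gives the geometric rate. -/

open Real

lemma le_div_add_mul_of_mul_le_mul_sub {x y c γ : ℝ} (hγc : 0 < γ + c)
    (h : c * y ≤ γ * (x - y)) : y ≤ γ / (γ + c) * x := by
  rw [div_mul_eq_mul_div, le_div_iff₀ hγc]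
  linarith

lemma rpow_mul_le_rpow_add_one {y M e : ℝ} (hy : 0 < y) (hyM : y ≤ M) (he : e ≤ 0) :
    M ^ e * y ≤ y ^ (e + 1) := by
  rw [rpow_add_one hy.ne']
  exact mul_le_mul_of_nonneg_right (rpow_le_rpow_of_nonpos hy hyM he) hy.le

lemma le_div_add_rpow_mul_of_rpow_le_mul_sub {x y M γ s : ℝ} (hy : 0 < y) (hyM : y ≤ M)
    (hs : s ≤ 1) (hγ : 0 ≤ γ) (h : y ^ s ≤ γ * (x - y)) :
    y ≤ γ / (γ + M ^ (s - 1)) * x := by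
  have hM : 0 < M ^ (s - 1) := rpow_pos_of_pos (hy.trans_le hyM) _
  refine le_div_add_mul_of_mul_le_mul_sub (by positivity) ?_
  calc M ^ (s - 1) * y ≤ y ^ (s - 1 + 1) := rpow_mul_le_rpow_add_one hy hyM (by linarith)
    _ = y ^ s := by rw [sub_add_cancel]
    _ ≤ γ * (x - y) := h

/-- **Linear convergence rate of the auxiliary sequence for `t ∈ (0, 1/2]`
(Lemma 4, first case).**  Real powers are `Real.rpow`.  If `φ_{k+1} ≤ φ_k`
and `φ_{k+1}^{2t} ≤ γ(φ_k - φ_{k+1})` for all `k ≥ 1`, then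
`φ_{k+1} ≤ (1 - φ₁^{2t-1}/(γ + φ₁^{2t-1}))^k φ₁`; for `t = 1/2` this is
`φ_{k+1} ≤ (γ/(1+γ))^k φ₁`. -/
theorem seq_rate_t_le_half (t γ : ℝ) (ht : t ∈ Set.Ioc (0 : ℝ) (1 / 2)) (hγ : 0 < γ)
    (φ : ℕ → ℝ)
    (hpos : ∀ k, 1 ≤ k → 0 < φ k)
    (hmono : ∀ k, 1 ≤ k → φ (k + 1) ≤ φ k)
    (hineq : ∀ k, 1 ≤ k → φ (k + 1) ^ (2 * t) ≤ γ * (φ k - φ (k + 1))) :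
    ∀ k, 1 ≤ k →
      φ (k + 1) ≤ (1 - φ 1 ^ (2 * t - 1) / (γ + φ 1 ^ (2 * t - 1))) ^ k * φ 1 := by
  set c := φ 1 ^ (2 * t - 1)
  have hγc : 0 < γ + c := add_pos hγ (rpow_pos_of_pos (hpos 1 le_rfl) _)
  have hle_one : ∀ k, 1 ≤ k → φ k ≤ φ 1 := fun k hk =>
    antitoneOn_nat_Ici_of_succ_le hmono (Set.mem_Ici.2 le_rfl) hk hk
  have hstep : ∀ k, 1 ≤ k → φ (k + 1) ≤ γ / (γ + c) * φ k := fun k hk =>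
    le_div_add_rpow_mul_of_rpow_le_mul_sub (hpos (k + 1) (by omega))
      (hle_one (k + 1) (by omega)) (by linarith [ht.2]) hγ.le (hineq k hk)
  have hfactor : 1 - c / (γ + c) = γ / (γ + c) := by field_simp; ring
  intro k _
  rw [hfactor]
  exact le_geom (u := fun n => φ (n + 1)) (div_pos hγ hγc).le k fun n _ => hstep (n + 1) (by omega)
end

section
/- Let t ∈ (1/2, 1), γ > 0, and let (φ_k)_{k≥1} be a sequence of positive real numbers such that for every k ≥ 1, φ_{k+1} ≤ φ_k and φ_{k+1}^{2t} ≤ γ (φ_k − φ_{k+1}). Then for every σ ∈ (0,1) and every k ≥ 1, φ_{k+1} ≤ max( (1−σ)^{k/2} φ₁ , ( φ₁^{1−2t} + (2t−1)(1−σ)^{2t} k / (2γ) )^{1/(1−2t)} ). -/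
/-!
Write `s = 1 - 2t < 0`. A step with `φ_{k+1} > (1 - σ) φ_k` raises `φ^s` by at least
`c = (2t - 1)(1 - σ)^{2t} / γ`: by convexity of `x ↦ x^s` the increment is at least
`(2t - 1) φ_k^{-2t} (φ_k - φ_{k+1})`, and the recursion bounds `φ_k - φ_{k+1}` below by
`φ_{k+1}^{2t} / γ ≥ (1 - σ)^{2t} φ_k^{2t} / γ`. Every other step multiplies `φ` by at most
`1 - σ`. Among the first `k` steps one of the two kinds occurs at least `k/2` times, which gives
the first or the second term of the maximum.
-/

open Real

lemma one_add_mul_one_sub_le_rpow_neg {u q : ℝ} (hu : 0 < u) (hq0 : 0 ≤ q) (hq1 : q ≤ 1) :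
    1 + q * (1 - u) ≤ u ^ (-q) := by
  set v := 1 + q * (u - 1)
  have hbern : u ^ q ≤ v := by
    simpa using rpow_one_add_le_one_add_mul_self (by linarith : -1 ≤ u - 1) hq0 hq1
  have hv : 0 < v := (rpow_pos_of_pos hu q).trans_le hbern
  calc 1 + q * (1 - u) = 2 - v := by ring
    _ ≤ v⁻¹ := by rw [← one_div, le_div_iff₀ hv]; nlinarith [sq_nonneg (v - 1)]
    _ ≤ (u ^ q)⁻¹ := inv_anti₀ (rpow_pos_of_pos hu q) hbern
    _ = u ^ (-q) := (rpow_neg hu.le q).symm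

lemma rpow_add_mul_rpow_sub_one_mul_sub_le_rpow {p x y : ℝ} (hp0 : p ≤ 0) (hp1 : -1 ≤ p)
    (hx : 0 < x) (hy : 0 < y) : x ^ p + p * x ^ (p - 1) * (y - x) ≤ y ^ p := by
  have hbern := one_add_mul_one_sub_le_rpow_neg (div_pos hy hx) (neg_nonneg.2 hp0)
    (neg_le.1 hp1)
  rw [neg_neg] at hbern
  calc x ^ p + p * x ^ (p - 1) * (y - x) = x ^ p * (1 + -p * (1 - y / x)) := by
        rw [rpow_sub_one hx.ne']; field_simp; ring
    _ ≤ x ^ p * (y / x) ^ p := by gcongr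
    _ = y ^ p := by rw [div_rpow hy.le hx.le, mul_div_cancel₀ _ (rpow_pos_of_pos hx p).ne']

lemma rpow_one_sub_two_mul_add_le {t γ ρ x y : ℝ} (ht1 : 1 / 2 ≤ t) (ht2 : t ≤ 1) (hγ : 0 < γ)
    (hρ : 0 ≤ ρ) (hx : 0 < x) (hy : 0 < y) (hρxy : ρ * x ≤ y)
    (hrec : y ^ (2 * t) ≤ γ * (x - y)) :
    x ^ (1 - 2 * t) + (2 * t - 1) * ρ ^ (2 * t) / γ ≤ y ^ (1 - 2 * t) := by
  have htangent := rpow_add_mul_rpow_sub_one_mul_sub_le_rpow (p := 1 - 2 * t) (by linarith)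
    (by linarith) hx hy
  rw [show 1 - 2 * t - 1 = -(2 * t) by ring] at htangent
  have hgain : ρ ^ (2 * t) / γ ≤ x ^ (-(2 * t)) * (x - y) := by
    rw [div_le_iff₀ hγ]
    calc ρ ^ (2 * t) ≤ (y / x) ^ (2 * t) := by
          gcongr
          rwa [le_div_iff₀ hx]
      _ = x ^ (-(2 * t)) * y ^ (2 * t) := by
          rw [div_rpow hy.le hx.le, rpow_neg hx.le]; ring
      _ ≤ x ^ (-(2 * t)) * (x - y) * γ := by
          rw [mul_assoc, mul_comm (x - y)]; gcongr
  calc x ^ (1 - 2 * t) + (2 * t - 1) * ρ ^ (2 * t) / γ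
      ≤ x ^ (1 - 2 * t) + (2 * t - 1) * (x ^ (-(2 * t)) * (x - y)) := by
        rw [mul_div_assoc]; gcongr; linarith
    _ = x ^ (1 - 2 * t) + (1 - 2 * t) * x ^ (-(2 * t)) * (y - x) := by ring
    _ ≤ y ^ (1 - 2 * t) := htangent

lemma exists_add_eq_and_le_pow_mul_and_add_mul_le_rpow {φ : ℕ → ℝ} {ρ s c : ℝ}
    (hpos : ∀ k, 1 ≤ k → 0 < φ k) (hmono : ∀ k, 1 ≤ k → φ (k + 1) ≤ φ k) (hρ : 0 ≤ ρ)
    (hs : s ≤ 0) (hgain : ∀ k, 1 ≤ k → ρ * φ k ≤ φ (k + 1) → φ k ^ s + c ≤ φ (k + 1) ^ s)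
    (k : ℕ) :
    ∃ n m : ℕ, n + m = k ∧ φ (k + 1) ≤ ρ ^ n * φ 1 ∧ φ 1 ^ s + m * c ≤ φ (k + 1) ^ s := by
  induction k with
  | zero => exact ⟨0, 0, rfl, by simp, by simp⟩
  | succ k ih =>
    obtain ⟨n, m, rfl, hgeom, hlin⟩ := ih
    by_cases hratio : ρ * φ (n + m + 1) ≤ φ (n + m + 1 + 1)
    · refine ⟨n, m + 1, by omega, (hmono _ le_add_self).trans hgeom, ?_⟩
      push_cast
      linarith [hgain _ le_add_self hratio]
    · refine ⟨n + 1, m, by omega, ?_, ?_⟩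
      · calc φ (n + m + 1 + 1) ≤ ρ * φ (n + m + 1) := (not_le.1 hratio).le
          _ ≤ ρ * (ρ ^ n * φ 1) := by gcongr
          _ = ρ ^ (n + 1) * φ 1 := by ring
      · exact hlin.trans
          (rpow_le_rpow_of_nonpos (hpos _ le_add_self) (hmono _ le_add_self) hs)

lemma le_max_rpow_of_le_pow_mul_of_add_mul_le_rpow {ρ a b c s y : ℝ} {n m k : ℕ}
    (hρ0 : 0 < ρ) (hρ1 : ρ ≤ 1) (ha : 0 ≤ a) (hb : 0 < b) (hc : 0 ≤ c) (hs : s < 0) (hy : 0 < y)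
    (hk : n + m = k) (hgeom : y ≤ ρ ^ n * a) (hlin : b + m * c ≤ y ^ s) :
    y ≤ max (ρ ^ ((k : ℝ) / 2) * a) ((b + c * k / 2) ^ (1 / s)) := by
  have hk : (n : ℝ) + m = k := by exact_mod_cast hk
  rcases le_total m n with hmn | hnm
  · have hmn : (m : ℝ) ≤ n := by exact_mod_cast hmn
    refine le_max_of_le_left (hgeom.trans ?_)
    rw [← rpow_natCast]
    exact mul_le_mul_of_nonneg_right (rpow_le_rpow_of_exponent_ge hρ0 hρ1 (by linarith)) ha
  · have hnm : (n : ℝ) ≤ m := by exact_mod_cast hnm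
    refine le_max_of_le_right ?_
    rw [one_div, le_rpow_inv_iff_of_neg hy (by positivity) hs]
    refine le_trans ?_ hlin
    nlinarith [mul_le_mul_of_nonneg_left hnm hc]

/-- **Convergence rate of the auxiliary sequence for `t ∈ (1/2, 1)`
(Lemma 4, second case).**  Real powers are `Real.rpow` (note `1 - 2t < 0`).
If `φ_{k+1} ≤ φ_k` and `φ_{k+1}^{2t} ≤ γ(φ_k - φ_{k+1})` for all `k ≥ 1`,
then for every `σ ∈ (0,1)` and `k ≥ 1`,
`φ_{k+1} ≤ max((1-σ)^{k/2} φ₁, (φ₁^{1-2t} + (2t-1)(1-σ)^{2t} k/(2γ))^{1/(1-2t)})`. -/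
theorem seq_rate_t_gt_half (t γ : ℝ) (ht : t ∈ Set.Ioo (1 / 2 : ℝ) 1) (hγ : 0 < γ)
    (φ : ℕ → ℝ)
    (hpos : ∀ k, 1 ≤ k → 0 < φ k)
    (hmono : ∀ k, 1 ≤ k → φ (k + 1) ≤ φ k)
    (hineq : ∀ k, 1 ≤ k → φ (k + 1) ^ (2 * t) ≤ γ * (φ k - φ (k + 1))) :
    ∀ σ ∈ Set.Ioo (0 : ℝ) 1, ∀ k : ℕ, 1 ≤ k →
      φ (k + 1) ≤ max ((1 - σ) ^ ((k : ℝ) / 2) * φ 1)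
        ((φ 1 ^ (1 - 2 * t)
          + (2 * t - 1) * (1 - σ) ^ (2 * t) * (k : ℝ) / (2 * γ)) ^ (1 / (1 - 2 * t))) := by
  obtain ⟨ht1, ht2⟩ := ht
  rintro σ ⟨hσ0, hσ1⟩ k hk
  obtain ⟨n, m, hnm, hgeom, hlin⟩ := exists_add_eq_and_le_pow_mul_and_add_mul_le_rpow hpos hmono
    (by linarith : 0 ≤ 1 - σ) (by linarith : 1 - 2 * t ≤ 0)
    (fun j hj hratio ↦ rpow_one_sub_two_mul_add_le ht1.le ht2.le hγ (by linarith)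
      (hpos j hj) (hpos (j + 1) (by omega)) hratio (hineq j hj)) k
  have hc : 0 ≤ (2 * t - 1) * (1 - σ) ^ (2 * t) / γ := by
    have : 0 ≤ 2 * t - 1 := by linarith
    positivity
  have hbound := le_max_rpow_of_le_pow_mul_of_add_mul_le_rpow (by linarith) (by linarith)
    (hpos 1 le_rfl).le (rpow_pos_of_pos (hpos 1 le_rfl) _) hc (by linarith)
    (hpos _ (by omega)) hnm hgeom hlin
  convert hbound using 4
  field_simp
end

section
/- Let t ∈ (1/2, 1), γ > 0, and let (φ_k)_{k≥1} be a sequence of positive real numbers such that for every k ≥ 1, φ_{k+1} ≤ φ_k and φ_{k+1}^{2t} ≤ γ (φ_k − φ_{k+1}). Then for every σ ∈ (0,1) there exists K₀ ≥ 1 such that for all k ≥ K₀, φ_{k+1} ≤ ( φ₁^{1−2t} + (2t−1)(1−σ)^{2t} k / (2γ) )^{1/(1−2t)}; that is, the cost-gap sequence eventually decays at the sublinear rate O(k^{1/(1−2t)}). -/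
/-!
With `q = 2t - 1 ∈ (0, 1)` put `ψ_k = φ_{k+1}^{-q}`. Bernoulli's inequality (the convexity of
`x ↦ x^{-q}`) turns the hypothesis into `ψ_k + (q/γ) (φ_{k+2}/φ_{k+1})^{2t} ≤ ψ_{k+1}`.
Either the ratio `φ_{k+2}/φ_{k+1}` is at least `1 - σ`, and `ψ` grows by the constant
`c = q (1 - σ)^{2t} / γ`, or it is smaller, and `ψ` grows by the factor `(1 - σ)^{-q} > 1`.
Hence `ψ` increases at least linearly, so eventually the multiplicative growth alone beats an
additive step of `c`; from then on `ψ_k ≥ ψ_0 + c k / 2` for large `k`, which is the claim after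
taking the power `1 / (1 - 2t) < 0`.
-/

open Filter

namespace Real

/-- The case `-1 ≤ p ≤ 0` of Bernoulli's inequality, from the case `0 ≤ -p ≤ 1` and `x⁻¹ ≥ 2 - x`. -/
lemma one_sub_mul_le_rpow_neg {s q : ℝ} (hs : -1 < s) (hq₀ : 0 ≤ q) (hq₁ : q ≤ 1) :
    1 - q * s ≤ (1 + s) ^ (-q) := by
  have hpos : 0 < (1 + s) ^ q := rpow_pos_of_pos (by linarith) q
  have hbern : (1 + s) ^ q ≤ 1 + q * s := rpow_one_add_le_one_add_mul_self hs.le hq₀ hq₁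
  rw [rpow_neg (by linarith), ← one_div, le_div_iff₀ hpos]
  nlinarith [sq_nonneg ((1 + s) ^ q - 1)]

lemma rpow_one_sub_two_mul_add_le {t γ a b : ℝ} (ht₁ : 1 / 2 ≤ t) (ht₂ : t ≤ 1) (hγ : 0 < γ)
    (ha : 0 < a) (hb : 0 < b) (h : b ^ (2 * t) ≤ γ * (a - b)) :
    a ^ (1 - 2 * t) + (2 * t - 1) / γ * (b / a) ^ (2 * t) ≤ b ^ (1 - 2 * t) := by
  have hbern : 1 - (2 * t - 1) * (b / a - 1) ≤ (b / a) ^ (1 - 2 * t) := by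
    have := one_sub_mul_le_rpow_neg (s := b / a - 1) (by linarith [div_pos hb ha])
      (q := 2 * t - 1) (by linarith) (by linarith)
    rwa [add_sub_cancel, neg_sub] at this
  have hdiff : b ^ (2 * t) / γ ≤ a - b := by rwa [div_le_iff₀' hγ]
  calc a ^ (1 - 2 * t) + (2 * t - 1) / γ * (b / a) ^ (2 * t)
      = a ^ (1 - 2 * t) + (2 * t - 1) * (b ^ (2 * t) / γ) / a ^ (2 * t) := by
        rw [div_rpow hb.le ha.le]; ring
    _ ≤ a ^ (1 - 2 * t) + (2 * t - 1) * (a - b) / a ^ (2 * t) := by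
        gcongr; linarith
    _ = (1 - (2 * t - 1) * (b / a - 1)) * a ^ (1 - 2 * t) := by
        rw [rpow_sub ha, rpow_one]; field_simp; ring
    _ ≤ (b / a) ^ (1 - 2 * t) * a ^ (1 - 2 * t) := by gcongr
    _ = b ^ (1 - 2 * t) := by
        rw [← mul_rpow (div_pos hb ha).le ha.le, div_mul_cancel₀ _ ha.ne']

lemma min_add_mul_rpow_one_sub_two_mul_le {t γ σ a b : ℝ} (ht₁ : 1 / 2 ≤ t) (ht₂ : t ≤ 1)
    (hγ : 0 < γ) (hσ : σ < 1) (ha : 0 < a) (hb : 0 < b) (h : b ^ (2 * t) ≤ γ * (a - b)) :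
    min (a ^ (1 - 2 * t) + (2 * t - 1) * (1 - σ) ^ (2 * t) / γ)
      ((1 - σ) ^ (1 - 2 * t) * a ^ (1 - 2 * t)) ≤ b ^ (1 - 2 * t) := by
  by_cases hba : (1 - σ) * a ≤ b
  · refine (min_le_left _ _).trans (le_trans ?_ (rpow_one_sub_two_mul_add_le ht₁ ht₂ hγ ha hb h))
    have hratio : 1 - σ ≤ b / a := (le_div_iff₀ ha).mpr hba
    have : (1 - σ) ^ (2 * t) ≤ (b / a) ^ (2 * t) := by gcongr
    calc a ^ (1 - 2 * t) + (2 * t - 1) * (1 - σ) ^ (2 * t) / γ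
        = a ^ (1 - 2 * t) + (2 * t - 1) / γ * (1 - σ) ^ (2 * t) := by ring
      _ ≤ _ := by gcongr; exact div_nonneg (by linarith) hγ.le
  · refine (min_le_right _ _).trans ?_
    rw [← mul_rpow (by linarith) ha.le]
    exact rpow_le_rpow_of_nonpos hb (not_le.mp hba).le (by linarith)

end Real

lemma add_mul_le_of_add_le_succ {ψ : ℕ → ℝ} {c : ℝ} (h : ∀ k, ψ k + c ≤ ψ (k + 1)) (n : ℕ) :
    ψ 0 + c * n ≤ ψ n := by
  induction n with
  | zero => simp
  | succ n ih => push_cast; linarith [h n]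

section MinGrowth

variable {ψ : ℕ → ℝ} {c r : ℝ}

lemma le_of_min_add_mul_le (h₀ : 0 ≤ ψ 0) (hr : 1 ≤ r) (hc : 0 ≤ c)
    (h : ∀ k, min (ψ k + c) (r * ψ k) ≤ ψ (k + 1)) (n : ℕ) : ψ 0 ≤ ψ n := by
  induction n with
  | zero => rfl
  | succ n ih =>
    refine ih.trans (le_trans ?_ (h n))
    exact le_min (by linarith) (by nlinarith)

/-- Once `ψ k ≥ c / (r - 1)` the multiplicative step dominates the additive one; such a `k`
exists because `ψ` grows by at least `min c ((r - 1) ψ 0) > 0` per step. -/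
lemma exists_forall_add_le_of_min_add_mul_le (h₀ : 0 < ψ 0) (hr : 1 < r) (hc : 0 < c)
    (h : ∀ k, min (ψ k + c) (r * ψ k) ≤ ψ (k + 1)) :
    ∃ K, ∀ k ≥ K, ψ k + c ≤ ψ (k + 1) := by
  set δ := min c ((r - 1) * ψ 0)
  have hδ : 0 < δ := lt_min hc (mul_pos (by linarith) h₀)
  have hδstep : ∀ k, ψ k + δ ≤ ψ (k + 1) := fun k ↦ by
    have := le_of_min_add_mul_le h₀.le hr.le hc.le h k
    refine le_trans ?_ (h k)
    exact le_min (by linarith [min_le_left c ((r - 1) * ψ 0)])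
      (by nlinarith [min_le_right c ((r - 1) * ψ 0)])
  have hmono : Monotone ψ := monotone_nat_of_le_succ fun k ↦ by linarith [hδstep k]
  obtain ⟨K, hK⟩ := exists_nat_ge (c / (r - 1) / δ)
  refine ⟨K, fun k hk ↦ le_trans ?_ (h k)⟩
  have hψK : c / (r - 1) ≤ ψ K := by
    have := add_mul_le_of_add_le_succ hδstep K
    rw [div_le_iff₀ hδ] at hK
    nlinarith
  have : c ≤ (r - 1) * ψ k := by
    rw [div_le_iff₀' (by linarith)] at hψK
    nlinarith [hmono hk]
  exact le_min le_rfl (by linarith)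

lemma eventually_add_half_mul_le_of_min_add_mul_le (h₀ : 0 < ψ 0) (hr : 1 < r) (hc : 0 < c)
    (h : ∀ k, min (ψ k + c) (r * ψ k) ≤ ψ (k + 1)) :
    ∀ᶠ k in atTop, ψ 0 + c / 2 * k ≤ ψ k := by
  obtain ⟨K, hK⟩ := exists_forall_add_le_of_min_add_mul_le h₀ hr hc h
  filter_upwards [eventually_ge_atTop (2 * K)] with k hk
  obtain ⟨n, rfl⟩ : ∃ n, k = K + n := ⟨k - K, by omega⟩
  have hlin := add_mul_le_of_add_le_succ (ψ := fun n ↦ ψ (K + n)) (c := c)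
    (fun n ↦ hK (K + n) (by omega)) n
  have hKn : (K : ℝ) ≤ n := by exact_mod_cast (by omega : K ≤ n)
  have := le_of_min_add_mul_le h₀.le hr.le hc.le h K
  simp only [add_zero] at hlin
  push_cast
  nlinarith

end MinGrowth

theorem seq_eventual_sublinear_rate_general (t γ : ℝ) (ht : t ∈ Set.Ioo (1 / 2 : ℝ) 1) (hγ : 0 < γ)
    (φ : ℕ → ℝ)
    (hpos : ∀ k, 1 ≤ k → 0 < φ k)
    (hineq : ∀ k, 1 ≤ k → φ (k + 1) ^ (2 * t) ≤ γ * (φ k - φ (k + 1))) :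
    ∀ σ ∈ Set.Ioo (0 : ℝ) 1, ∃ K₀ : ℕ, 1 ≤ K₀ ∧ ∀ k : ℕ, K₀ ≤ k →
      φ (k + 1) ≤ (φ 1 ^ (1 - 2 * t)
        + (2 * t - 1) * (1 - σ) ^ (2 * t) * (k : ℝ) / (2 * γ)) ^ (1 / (1 - 2 * t)) := by
  rintro σ ⟨hσ₀, hσ₁⟩
  obtain ⟨ht₁, ht₂⟩ := ht
  set ψ : ℕ → ℝ := fun k ↦ φ (k + 1) ^ (1 - 2 * t)
  have hstep : ∀ k, min (ψ k + (2 * t - 1) * (1 - σ) ^ (2 * t) / γ)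
      ((1 - σ) ^ (1 - 2 * t) * ψ k) ≤ ψ (k + 1) := fun k ↦
    Real.min_add_mul_rpow_one_sub_two_mul_le ht₁.le ht₂.le hγ hσ₁ (hpos _ (by omega))
      (hpos _ (by omega)) (hineq (k + 1) (by omega))
  have hc : 0 < (2 * t - 1) * (1 - σ) ^ (2 * t) / γ :=
    div_pos (mul_pos (by linarith) (Real.rpow_pos_of_pos (by linarith) _)) hγ
  have hr : 1 < (1 - σ) ^ (1 - 2 * t) :=
    Real.one_lt_rpow_of_pos_of_lt_one_of_neg (by linarith) (by linarith) (by linarith)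
  have hψ₀ : 0 < ψ 0 := Real.rpow_pos_of_pos (hpos 1 le_rfl) _
  obtain ⟨K, hK⟩ :=
    eventually_atTop.mp (eventually_add_half_mul_le_of_min_add_mul_le hψ₀ hr hc hstep)
  refine ⟨K + 1, by omega, fun k hk ↦ ?_⟩
  have hrate : φ 1 ^ (1 - 2 * t) + (2 * t - 1) * (1 - σ) ^ (2 * t) * (k : ℝ) / (2 * γ)
      = ψ 0 + (2 * t - 1) * (1 - σ) ^ (2 * t) / γ / 2 * k := by
    simp only [ψ]; ring
  rw [hrate, one_div,
    Real.le_rpow_inv_iff_of_neg (hpos _ (by omega)) (by positivity) (by linarith)]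
  exact hK k (by omega)

/-- **Eventual sublinear decay of the auxiliary sequence for `t ∈ (1/2, 1)`.**
Real powers are `Real.rpow` (note `1 - 2t < 0`).  If `φ_{k+1} ≤ φ_k` and
`φ_{k+1}^{2t} ≤ γ(φ_k - φ_{k+1})` for all `k ≥ 1`, then for every
`σ ∈ (0,1)` there is `K₀ ≥ 1` such that for all `k ≥ K₀`,
`φ_{k+1} ≤ (φ₁^{1-2t} + (2t-1)(1-σ)^{2t} k/(2γ))^{1/(1-2t)}`,
i.e. the sequence eventually decays at the rate `O(k^{1/(1-2t)})`. -/
theorem seq_eventual_sublinear_rate (t γ : ℝ) (ht : t ∈ Set.Ioo (1 / 2 : ℝ) 1) (hγ : 0 < γ)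
    (φ : ℕ → ℝ)
    (hpos : ∀ k, 1 ≤ k → 0 < φ k)
    (hmono : ∀ k, 1 ≤ k → φ (k + 1) ≤ φ k)
    (hineq : ∀ k, 1 ≤ k → φ (k + 1) ^ (2 * t) ≤ γ * (φ k - φ (k + 1))) :
    ∀ σ ∈ Set.Ioo (0 : ℝ) 1, ∃ K₀ : ℕ, 1 ≤ K₀ ∧ ∀ k : ℕ, K₀ ≤ k →
      φ (k + 1) ≤ (φ 1 ^ (1 - 2 * t)
        + (2 * t - 1) * (1 - σ) ^ (2 * t) * (k : ℝ) / (2 * γ)) ^ (1 / (1 - 2 * t)) :=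
  seq_eventual_sublinear_rate_general t γ ht hγ φ hpos hineq
end
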